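/- arXiv:2303.04969 — 3 statements merged into one kernel-verified Lean document; each statement's English description precedes it below -/
import Mathlib

section
/- Let γ, Λ ∈ M₂(ℂ) satisfy det γ = 0, det Λ = 0, Λ₂₁ ≠ 0, D := Λ₂₁γ₁₁ − Λ₁₁γ₂₁ ≠ 0, and the trace identity Λ₁₁γ₂₂ − Λ₁₂γ₂₁ − Λ₂₁γ₁₂ + Λ₂₂γ₁₁ = 0. Then G := Λ₁₁/Λ₂₁ and ω := Λ₂₁²/D satisfy [[Gω, −G²ω],[ω, −Gω]] · γ = Λ. Moreover this pair is unique: if G′, ω′ ∈ ℂ satisfy [[G′ω′, −G′²ω′],[ω′, −G′ω′]] · γ = Λ, then G′ = G and ω′ = ω. -/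
/-!
Since `Ω̃ = ω (G, 1)ᵀ (1, −G)`, the first row of `Ω̃γ` is `G` times its second row, which is
`ω (γ₀ⱼ − G γ₁ⱼ)`. As `det Λ = 0` and `Λ₁₀ ≠ 0`, the first row of `Λ` is `Λ₀₀ / Λ₁₀` times its
second, so `Ω̃γ = Λ` forces `G = Λ₀₀ / Λ₁₀`, and then column `0` forces `ω = Λ₁₀² / D`. With these
values column `1` holds as well: that is exactly the trace identity, modulo `det Λ = 0`.
-/

open Matrix

def connectionMatrix {R : Type*} [CommRing R] (G ω : R) : Matrix (Fin 2) (Fin 2) R :=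
  !![G * ω, -G ^ 2 * ω; ω, -G * ω]

section CommRing

variable {R : Type*} [CommRing R]

theorem connectionMatrix_mul_apply_one (G ω : R) (γ : Matrix (Fin 2) (Fin 2) R) (j : Fin 2) :
    (connectionMatrix G ω * γ) 1 j = ω * (γ 0 j - G * γ 1 j) := by
  simp only [connectionMatrix, mul_apply, Fin.sum_univ_two, of_apply, cons_val', cons_val_zero,
    cons_val_one, empty_val', cons_val_fin_one]
  ring

theorem connectionMatrix_mul_apply_zero (G ω : R) (γ : Matrix (Fin 2) (Fin 2) R) (j : Fin 2) :
    (connectionMatrix G ω * γ) 0 j = G * (connectionMatrix G ω * γ) 1 j := by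
  rw [connectionMatrix_mul_apply_one]
  simp only [connectionMatrix, mul_apply, Fin.sum_univ_two, of_apply, cons_val', cons_val_zero,
    cons_val_one, empty_val', cons_val_fin_one]
  ring

theorem connectionMatrix_mul_eq_iff (G ω : R) (γ Λ : Matrix (Fin 2) (Fin 2) R) :
    connectionMatrix G ω * γ = Λ ↔
      ∀ j, ω * (γ 0 j - G * γ 1 j) = Λ 1 j ∧ G * Λ 1 j = Λ 0 j := by
  constructor
  · rintro rfl j
    exact ⟨(connectionMatrix_mul_apply_one G ω γ j).symm,
      (connectionMatrix_mul_apply_zero G ω γ j).symm⟩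
  · intro h
    ext i j
    fin_cases i
    · rw [Fin.zero_eta, connectionMatrix_mul_apply_zero, connectionMatrix_mul_apply_one,
        (h j).1, (h j).2]
    · rw [Fin.mk_one, connectionMatrix_mul_apply_one, (h j).1]

end CommRing

section Field

variable {K : Type*} [Field K] {γ Λ : Matrix (Fin 2) (Fin 2) K}

theorem sub_div_mul_eq_div (h21 : Λ 1 0 ≠ 0) :
    γ 0 0 - Λ 0 0 / Λ 1 0 * γ 1 0 = (Λ 1 0 * γ 0 0 - Λ 0 0 * γ 1 0) / Λ 1 0 := by
  field_simp

theorem div_mul_apply_one_eq_apply_zero (hΛ : Λ.det = 0) (h21 : Λ 1 0 ≠ 0) (j : Fin 2) :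
    Λ 0 0 / Λ 1 0 * Λ 1 j = Λ 0 j := by
  rw [det_fin_two] at hΛ
  rw [div_mul_eq_mul_div, div_eq_iff h21]
  fin_cases j
  · rw [Fin.zero_eta, mul_comm]
  · rw [Fin.mk_one]
    linear_combination hΛ

theorem weierstrass_data_spec (hΛ : Λ.det = 0) (h21 : Λ 1 0 ≠ 0)
    (hD : Λ 1 0 * γ 0 0 - Λ 0 0 * γ 1 0 ≠ 0)
    (htr : Λ 0 0 * γ 1 1 - Λ 0 1 * γ 1 0 - Λ 1 0 * γ 0 1 + Λ 1 1 * γ 0 0 = 0) :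
    connectionMatrix (Λ 0 0 / Λ 1 0) (Λ 1 0 ^ 2 / (Λ 1 0 * γ 0 0 - Λ 0 0 * γ 1 0)) * γ = Λ := by
  rw [connectionMatrix_mul_eq_iff]
  refine fun j ↦ ⟨?_, div_mul_apply_one_eq_apply_zero hΛ h21 j⟩
  rw [det_fin_two] at hΛ
  fin_cases j
  · rw [Fin.zero_eta, sub_div_mul_eq_div h21]
    field_simp
  · rw [Fin.mk_one]
    field_simp
    linear_combination -Λ 1 0 * htr + γ 1 0 * hΛ

theorem weierstrass_data_unique (h21 : Λ 1 0 ≠ 0) (hD : Λ 1 0 * γ 0 0 - Λ 0 0 * γ 1 0 ≠ 0)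
    {G ω : K} (h : connectionMatrix G ω * γ = Λ) :
    G = Λ 0 0 / Λ 1 0 ∧ ω = Λ 1 0 ^ 2 / (Λ 1 0 * γ 0 0 - Λ 0 0 * γ 1 0) := by
  obtain ⟨hω, hG⟩ := (connectionMatrix_mul_eq_iff G ω γ Λ).mp h 0
  have hG' : G = Λ 0 0 / Λ 1 0 := eq_div_of_mul_eq h21 hG
  refine ⟨hG', ?_⟩
  rw [hG', sub_div_mul_eq_div h21] at hω
  field_simp at hω ⊢
  exact hω

end Field

theorem weierstrass_data_exists_unique_general (γ Λ : Matrix (Fin 2) (Fin 2) ℂ)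
    (hΛ : Λ.det = 0) (h21 : Λ 1 0 ≠ 0)
    (hD : Λ 1 0 * γ 0 0 - Λ 0 0 * γ 1 0 ≠ 0)
    (htr : Λ 0 0 * γ 1 1 - Λ 0 1 * γ 1 0 - Λ 1 0 * γ 0 1 + Λ 1 1 * γ 0 0 = 0) :
    (!![(Λ 0 0 / Λ 1 0) * (Λ 1 0 ^ 2 / (Λ 1 0 * γ 0 0 - Λ 0 0 * γ 1 0)),
        -(Λ 0 0 / Λ 1 0) ^ 2 * (Λ 1 0 ^ 2 / (Λ 1 0 * γ 0 0 - Λ 0 0 * γ 1 0));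
        Λ 1 0 ^ 2 / (Λ 1 0 * γ 0 0 - Λ 0 0 * γ 1 0),
        -(Λ 0 0 / Λ 1 0) * (Λ 1 0 ^ 2 / (Λ 1 0 * γ 0 0 - Λ 0 0 * γ 1 0))] * γ = Λ) ∧
    (∀ G' ω' : ℂ,
      !![G' * ω', -G' ^ 2 * ω'; ω', -G' * ω'] * γ = Λ →
      G' = Λ 0 0 / Λ 1 0 ∧ ω' = Λ 1 0 ^ 2 / (Λ 1 0 * γ 0 0 - Λ 0 0 * γ 1 0)) :=
  ⟨weierstrass_data_spec hΛ h21 hD htr, fun _ _ ↦ weierstrass_data_unique h21 hD⟩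

theorem weierstrass_data_exists_unique (γ Λ : Matrix (Fin 2) (Fin 2) ℂ)
    (hγ : γ.det = 0) (hΛ : Λ.det = 0) (h21 : Λ 1 0 ≠ 0)
    (hD : Λ 1 0 * γ 0 0 - Λ 0 0 * γ 1 0 ≠ 0)
    (htr : Λ 0 0 * γ 1 1 - Λ 0 1 * γ 1 0 - Λ 1 0 * γ 0 1 + Λ 1 1 * γ 0 0 = 0) :
    (!![(Λ 0 0 / Λ 1 0) * (Λ 1 0 ^ 2 / (Λ 1 0 * γ 0 0 - Λ 0 0 * γ 1 0)),
        -(Λ 0 0 / Λ 1 0) ^ 2 * (Λ 1 0 ^ 2 / (Λ 1 0 * γ 0 0 - Λ 0 0 * γ 1 0));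
        Λ 1 0 ^ 2 / (Λ 1 0 * γ 0 0 - Λ 0 0 * γ 1 0),
        -(Λ 0 0 / Λ 1 0) * (Λ 1 0 ^ 2 / (Λ 1 0 * γ 0 0 - Λ 0 0 * γ 1 0))] * γ = Λ) ∧
    (∀ G' ω' : ℂ,
      !![G' * ω', -G' ^ 2 * ω'; ω', -G' * ω'] * γ = Λ →
      G' = Λ 0 0 / Λ 1 0 ∧ ω' = Λ 1 0 ^ 2 / (Λ 1 0 * γ 0 0 - Λ 0 0 * γ 1 0)) :=
  weierstrass_data_exists_unique_general γ Λ hΛ h21 hD htr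
end

section
/- Let a,b,c,d,e,f ∈ ℝ with b² + c² = e² + f² > 0 and be + cf = 0. Set γ = 2f₃, T = aγ + b f₁ + c f₂, L = dγ + e f₁ + f f₂, and Λ = (1/2)(T − iL) ∈ M₂(ℂ). Then: (i) |γ₁₁Λ₂₁ − γ₂₁Λ₁₁|² = 2((b² + c²) − (bf − ce)); (ii) (bf − ce)² = (b² + c²)²; and (iii) γ₁₁Λ₂₁ − γ₂₁Λ₁₁ ≠ 0 if and only if bf − ce < 0. (This is the orientability condition: the Weierstrass data of the Björling problem are well defined exactly when the signed area bf − ce of T and L is negative.) -/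
open Matrix

noncomputable def f1 : Matrix (Fin 2) (Fin 2) ℂ := !![0, 1; 1, 0]
noncomputable def f2 : Matrix (Fin 2) (Fin 2) ℂ := !![0, Complex.I; -Complex.I, 0]
noncomputable def f3 : Matrix (Fin 2) (Fin 2) ℂ := !![1, 0; 0, 0]

/-- γ = 2f₃ -/
noncomputable def γ₀ : Matrix (Fin 2) (Fin 2) ℂ := (2 : ℂ) • f3

/-- T = aγ + bf₁ + cf₂ -/
noncomputable def Tvec (a b c : ℝ) : Matrix (Fin 2) (Fin 2) ℂ :=
  (a : ℂ) • γ₀ + (b : ℂ) • f1 + (c : ℂ) • f2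

/-- Λ = (1/2)(T − iL) -/
noncomputable def Λmat (a b c d e f : ℝ) : Matrix (Fin 2) (Fin 2) ℂ :=
  (1 / 2 : ℂ) • (Tvec a b c - Complex.I • Tvec d e f)

/-! Since γ₁₁ = 2 and γ₂₁ = 0, the quantity in question is 2Λ₂₁ = (b − f) − i(c + e), whose squared
modulus is 2(b² + c²) − 2(bf − ce) once e² + f² = b² + c². The Lagrange identity
(bf − ce)² + (be + cf)² = (b² + c²)(e² + f²) together with be + cf = 0 forces bf − ce = ±(b² + c²),
and the modulus vanishes exactly in the + case. -/

lemma γ₀_apply_zero_zero : γ₀ 0 0 = 2 := by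
  simp [γ₀, f3]

lemma γ₀_apply_one_zero : γ₀ 1 0 = 0 := by
  simp [γ₀, f3]

lemma Tvec_apply_one_zero (a b c : ℝ) : Tvec a b c 1 0 = ⟨b, -c⟩ := by
  apply Complex.ext <;> simp [Tvec, γ₀, f1, f2, f3]

lemma Λmat_apply_one_zero (a b c d e f : ℝ) :
    Λmat a b c d e f 1 0 = ⟨(b - f) / 2, -(c + e) / 2⟩ := by
  rw [Λmat, Matrix.smul_apply, Matrix.sub_apply, Matrix.smul_apply, Tvec_apply_one_zero,
    Tvec_apply_one_zero]
  apply Complex.ext <;> simp <;> ring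

lemma sq_cross_add_sq_dot {R : Type*} [CommRing R] (b c e f : R) :
    (b * f - c * e) ^ 2 + (b * e + c * f) ^ 2 = (b ^ 2 + c ^ 2) * (e ^ 2 + f ^ 2) := by
  ring

lemma ne_iff_neg_of_sq_eq_sq {R : Type*} [CommRing R] [LinearOrder R] [IsStrictOrderedRing R]
    {x s : R} (hs : 0 < s) (h : x ^ 2 = s ^ 2) : x ≠ s ↔ x < 0 := by
  rcases sq_eq_sq_iff_eq_or_eq_neg.mp h with rfl | rfl
  · exact iff_of_false (fun h => h rfl) hs.not_gt
  · exact iff_of_true (fun h => by linarith) (by linarith)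

theorem orientability_condition (a b c d e f : ℝ)
    (hnorm : b ^ 2 + c ^ 2 = e ^ 2 + f ^ 2) (hpos : 0 < b ^ 2 + c ^ 2)
    (horth : b * e + c * f = 0) :
    ‖γ₀ 0 0 * Λmat a b c d e f 1 0 - γ₀ 1 0 * Λmat a b c d e f 0 0‖ ^ 2
        = 2 * ((b ^ 2 + c ^ 2) - (b * f - c * e)) ∧
    (b * f - c * e) ^ 2 = (b ^ 2 + c ^ 2) ^ 2 ∧
    ((γ₀ 0 0 * Λmat a b c d e f 1 0 - γ₀ 1 0 * Λmat a b c d e f 0 0 ≠ 0)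
      ↔ b * f - c * e < 0) := by
  have hz : γ₀ 0 0 * Λmat a b c d e f 1 0 - γ₀ 1 0 * Λmat a b c d e f 0 0
      = ⟨b - f, -(c + e)⟩ := by
    rw [γ₀_apply_zero_zero, γ₀_apply_one_zero, Λmat_apply_one_zero]
    apply Complex.ext <;> simp <;> ring
  have hnorm_sq : ‖γ₀ 0 0 * Λmat a b c d e f 1 0 - γ₀ 1 0 * Λmat a b c d e f 0 0‖ ^ 2
      = 2 * ((b ^ 2 + c ^ 2) - (b * f - c * e)) := by
    rw [hz, Complex.sq_norm, Complex.normSq_mk]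
    linear_combination -hnorm
  have hcross : (b * f - c * e) ^ 2 = (b ^ 2 + c ^ 2) ^ 2 := by
    linear_combination
      sq_cross_add_sq_dot b c e f - (b ^ 2 + c ^ 2) * hnorm - (b * e + c * f) * horth
  refine ⟨hnorm_sq, hcross, ?_⟩
  rw [← norm_ne_zero_iff, ← pow_ne_zero_iff two_ne_zero, hnorm_sq,
    mul_ne_zero_iff_left two_ne_zero, sub_ne_zero, ne_comm]
  exact ne_iff_neg_of_sq_eq_sq hpos hcross
end

section
/- For β ∈ ℂ with β ≠ 0, define F₁ : ℂ → M₂(ℂ) by F₁(z) = [[cos(βz) + βz·sin(βz), z·cos(βz) − β⁻¹·sin(βz)],[β·sin(βz), cos(βz)]]. Then for every z ∈ ℂ: (i) det F₁(z) = 1, and (ii) F₁ is complex-differentiable at z with F₁′(z) = β²·[[z, −z²],[1, −z]]·F₁(z); equivalently, F₁ solves dF·F⁻¹ = [[G, −G²],[1, −G]]·Ω with Weierstrass data G = z and Ω = β² dz. -/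
/-!
Both claims are direct computations. The determinant is `cos² + sin²` once `β * β⁻¹ = 1`.
For the derivative, differentiating the entries of `F₁` gives the matrix
`[[β²z cos βz, -βz sin βz], [β² cos βz, -β sin βz]]`, and multiplying out
`β² [[z, -z²], [1, -z]] F₁(z)` gives the same matrix, the `z`-terms cancelling pairwise.
-/

open Matrix

/-- The frame F₁ for the parabolic catenoid. -/
noncomputable def F₁ (β : ℂ) (z : ℂ) : Matrix (Fin 2) (Fin 2) ℂ :=
  !![Complex.cos (β * z) + β * z * Complex.sin (β * z),
     z * Complex.cos (β * z) - β⁻¹ * Complex.sin (β * z);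
     β * Complex.sin (β * z), Complex.cos (β * z)]

theorem Matrix.hasDerivAt_of_fin_two {𝕜 F : Type*} [NontriviallyNormedField 𝕜]
    [NormedAddCommGroup F] [NormedSpace 𝕜 F] {a b c d : 𝕜 → F} {a' b' c' d' : F} {z : 𝕜}
    (ha : HasDerivAt a a' z) (hb : HasDerivAt b b' z)
    (hc : HasDerivAt c c' z) (hd : HasDerivAt d d' z) (i j : Fin 2) :
    HasDerivAt (fun w => !![a w, b w; c w, d w] i j) (!![a', b'; c', d'] i j) z := by
  fin_cases i <;> fin_cases j <;> simpa

theorem Complex.hasDerivAt_cos_const_mul (β z : ℂ) :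
    HasDerivAt (fun w => Complex.cos (β * w)) (-(β * Complex.sin (β * z))) z := by
  simpa [mul_comm] using (hasDerivAt_const_mul β).ccos (x := z)

theorem Complex.hasDerivAt_sin_const_mul (β z : ℂ) :
    HasDerivAt (fun w => Complex.sin (β * w)) (β * Complex.cos (β * z)) z := by
  simpa [mul_comm] using (hasDerivAt_const_mul β).csin (x := z)

section
variable {β : ℂ}

theorem det_F₁ (hβ : β ≠ 0) (z : ℂ) : (F₁ β z).det = 1 := by
  rw [F₁, det_fin_two_of]
  field_simp
  linear_combination Complex.sin_sq_add_cos_sq (β * z)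

theorem smul_mul_F₁_eq (hβ : β ≠ 0) (z : ℂ) :
    β ^ 2 • (!![z, -z ^ 2; 1, -z] * F₁ β z) =
      !![β ^ 2 * z * Complex.cos (β * z), -(β * z * Complex.sin (β * z));
         β ^ 2 * Complex.cos (β * z), -(β * Complex.sin (β * z))] := by
  rw [F₁, mul_fin_two, smul_of]
  ext i j
  fin_cases i <;> fin_cases j
  all_goals simp [-mul_eq_mul_left_iff]; field_simp; ring

end

theorem parabolic_frame (β : ℂ) (hβ : β ≠ 0) (z : ℂ) :
    (F₁ β z).det = 1 ∧
    ∀ i j : Fin 2,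
      HasDerivAt (fun w => F₁ β w i j)
        ((β ^ 2 • (!![z, -z ^ 2; 1, -z] * F₁ β z)) i j) z := by
  refine ⟨det_F₁ hβ z, ?_⟩
  have hcos := Complex.hasDerivAt_cos_const_mul β z
  have hsin := Complex.hasDerivAt_sin_const_mul β z
  have hlin : HasDerivAt (fun w => β * w) β z := hasDerivAt_const_mul β
  rw [smul_mul_F₁_eq hβ]
  refine Matrix.hasDerivAt_of_fin_two ?_ ?_ ((hsin.const_mul β).congr_deriv (by ring)) hcos
  · exact (hcos.add (hlin.mul hsin)).congr_deriv (by ring)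
  · exact (((hasDerivAt_id' z).mul hcos).sub (hsin.const_mul β⁻¹)).congr_deriv (by
      field_simp
      ring)
end
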